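/- If for every minimal prime p of Ass_R(N/IN), the p-symbolic topology on N is equivalent to the p-adic topology on N, then the I-symbolic topology on N is equivalent to the I-adic topology on N. -/

import Mathlib

/-!
Fix `n` and let `S` be the finite set of minimal associated primes of `N / I N`. An associated
prime of `I ^ n N` contains `I` and `Ann N`, hence lies in `Supp (N / I N)` and contains some
`p ∈ S`; through a primary decomposition of `I ^ n N` this gives `⋂_{p ∈ S} p ^ t N ⊆ I ^ n N`
for large `t`. For `p ∈ S`, `p` is the only minimal associated prime of `N / p N`, so the
`I`-symbolic powers of `N` lie in the `p`-symbolic ones, which by hypothesis eventually lie in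
`p ^ t N`.
-/

open Ideal

/-- The set of minimal associated primes of an `R`-module `M`. -/
def mAss (R : Type*) [CommRing R] (M : Type*) [AddCommGroup M] [Module R M] : Set (Ideal R) :=
  {p | Minimal (· ∈ associatedPrimes R M) p}

/-- The `n`-th symbolic power of `I` with respect to `N`:
elements `x ∈ N` with `s • x ∈ I ^ n • N` for some `s` outside every minimal prime of
`Ass_R (N / I N)`. -/
def symbPow (R : Type*) [CommRing R] (I : Ideal R) (N : Type*) [AddCommGroup N] [Module R N]
    (n : ℕ) : Set N :=
  {x | ∃ s : R, (∀ p ∈ mAss R (N ⧸ (I • ⊤ : Submodule R N)), s ∉ p) ∧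
    s • x ∈ (I ^ n • ⊤ : Submodule R N)}

/-- The `I`-symbolic topology on `N` is equivalent to the `I`-adic topology on `N`. -/
def symbEquivAdic (R : Type*) [CommRing R] (I : Ideal R) (N : Type*) [AddCommGroup N]
    [Module R N] : Prop :=
  ∀ n : ℕ, ∃ m : ℕ, symbPow R I N m ⊆ (I ^ n • ⊤ : Submodule R N)

open Filter

section Annihilator

variable {R M : Type*} [CommRing R] [AddCommGroup M] [Module R M]

lemma le_annihilator_quotient_smul_top (I : Ideal R) :
    I ≤ Module.annihilator R (M ⧸ (I • ⊤ : Submodule R M)) := by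
  rw [Submodule.annihilator_quotient]
  exact fun r hr => Submodule.mem_colon.mpr fun x _ => Submodule.smul_mem_smul hr trivial

lemma annihilator_le_annihilator_quotient (K : Submodule R M) :
    Module.annihilator R M ≤ Module.annihilator R (M ⧸ K) :=
  LinearMap.annihilator_le_of_surjective K.mkQ K.mkQ_surjective

/-- A consequence of `Supp (M / I M) = Supp M ∩ V(I)`. -/
lemma annihilator_quotient_smul_top_le [Module.Finite R M] {I q : Ideal R} [q.IsPrime]
    (hM : Module.annihilator R M ≤ q) (hI : I ≤ q) :
    Module.annihilator R (M ⧸ (I • ⊤ : Submodule R M)) ≤ q := by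
  have hq : (⟨q, ‹_›⟩ : PrimeSpectrum R) ∈ Module.support R (M ⧸ (I • ⊤ : Submodule R M)) := by
    rw [Module.support_quotient]
    exact ⟨Module.mem_support_iff_of_finite.mpr hM, hI⟩
  exact Module.mem_support_iff_of_finite.mp hq

end Annihilator

section MinimalAssociatedPrimes

variable {R M : Type*} [CommRing R] [IsNoetherianRing R] [AddCommGroup M] [Module R M]
  [Module.Finite R M]

lemma minimalPrimes_annihilator_subset_mAss : (Module.annihilator R M).minimalPrimes ⊆ mAss R M :=
  fun _ hp =>
    ⟨Module.associatedPrimes.minimalPrimes_annihilator_subset_associatedPrimes R M hp,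
      fun _ hq hqp => hp.2 ⟨hq.isPrime, Submodule.annihilator_top.symm.trans_le hq.annihilator_le⟩
        hqp⟩

lemma exists_mem_mAss_le {q : Ideal R} [q.IsPrime] (hq : Module.annihilator R M ≤ q) :
    ∃ p ∈ mAss R M, p ≤ q := by
  obtain ⟨p, hp, hpq⟩ := Ideal.exists_minimalPrimes_le hq
  exact ⟨p, minimalPrimes_annihilator_subset_mAss hp, hpq⟩

lemma mAss_quotient_smul_top_eq_singleton {p : Ideal R} [p.IsPrime]
    (hM : Module.annihilator R M ≤ p) : mAss R (M ⧸ (p • ⊤ : Submodule R M)) = {p} := by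
  have hann : Module.annihilator R (M ⧸ (p • ⊤ : Submodule R M)) = p :=
    le_antisymm (annihilator_quotient_smul_top_le hM le_rfl) (le_annihilator_quotient_smul_top p)
  have hpm : p ∈ mAss R (M ⧸ (p • ⊤ : Submodule R M)) := by
    apply minimalPrimes_annihilator_subset_mAss
    rw [hann, Ideal.minimalPrimes_eq_subsingleton_self]
    rfl
  refine Set.eq_singleton_iff_unique_mem.mpr ⟨hpm, fun q hq => ?_⟩
  have hpq : p ≤ q := hann ▸ Submodule.annihilator_top.symm.trans_le hq.1.annihilator_le
  exact le_antisymm (hq.2 hpm.1 hpq) hpq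

lemma exists_mem_mAss_le_of_mem_associatedPrimes_pow_smul_top {I q : Ideal R} {n : ℕ}
    (hq : q ∈ (I ^ n • ⊤ : Submodule R M).associatedPrimes) :
    ∃ p ∈ mAss R (M ⧸ (I • ⊤ : Submodule R M)), p ≤ q := by
  obtain ⟨hprime, x, rfl⟩ := hq
  have hann : Module.annihilator R (M ⧸ (I ^ n • ⊤ : Submodule R M)) ≤
      ((I ^ n • ⊤ : Submodule R M).colon {x}).radical := by
    rw [Submodule.annihilator_quotient]
    exact (Submodule.colon_mono le_rfl (Set.subset_univ _)).trans Ideal.le_radical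
  refine exists_mem_mAss_le
    (annihilator_quotient_smul_top_le ((annihilator_le_annihilator_quotient _).trans hann) ?_)
  exact fun r hr => hprime.mem_of_pow_mem n
    (hann (le_annihilator_quotient_smul_top _ (Ideal.pow_mem_pow hr n)))

/-- In a primary decomposition `K = ⋂ Q`, the radical of `(Q : M)` is an associated prime of `K`,
so it contains some `p ∈ S`, and then a power of `p` maps `M` into `Q`. -/
lemma eventually_iInf_pow_smul_top_le {K : Submodule R M} {S : Set (Ideal R)}
    (h : ∀ q ∈ K.associatedPrimes, ∃ p ∈ S, p ≤ q) :
    ∀ᶠ t in atTop, ⨅ p ∈ S, (p ^ t • ⊤ : Submodule R M) ≤ K := by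
  obtain ⟨T, hT⟩ :=
    Submodule.IsLasker.exists_isMinimalPrimaryDecomposition (Submodule.isLasker R M) K
  simp only [← hT.inf_eq, Finset.le_inf_iff, id]
  refine (eventually_all_finset T).mpr fun Q hQ => ?_
  obtain ⟨p, hpS, hpQ⟩ := h _ (hT.mem_associatedPrimes hQ)
  obtain ⟨e, he⟩ := Ideal.exists_pow_le_of_le_radical_of_fg hpQ (IsNoetherian.noetherian p)
  refine eventually_atTop.mpr ⟨e, fun t ht => ?_⟩
  calc ⨅ p ∈ S, (p ^ t • ⊤ : Submodule R M)
      ≤ p ^ e • ⊤ := (iInf₂_le p hpS).trans (Submodule.smul_mono_left (Ideal.pow_le_pow_right ht))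
    _ ≤ Q := Submodule.smul_le.mpr fun r hr x _ => Submodule.mem_colon.mp (he hr) x trivial

end MinimalAssociatedPrimes

section SymbolicPower

variable {R N : Type*} [CommRing R] [AddCommGroup N] [Module R N]

lemma symbPow_antitone (I : Ideal R) : Antitone (symbPow R I N) :=
  fun _ _ h _ ⟨s, hs, hsx⟩ => ⟨s, hs, Submodule.smul_mono_left (Ideal.pow_le_pow_right h) hsx⟩

lemma symbEquivAdic.eventually_symbPow_subset {I : Ideal R} (h : symbEquivAdic R I N) (n : ℕ) :
    ∀ᶠ m in atTop, symbPow R I N m ⊆ (I ^ n • ⊤ : Submodule R N) := by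
  obtain ⟨m, hm⟩ := h n
  exact eventually_atTop.mpr ⟨m, fun _ h => (symbPow_antitone I h).trans hm⟩

lemma symbPow_subset_symbPow {I J : Ideal R} (hIJ : I ≤ J)
    (h : ∀ q ∈ mAss R (N ⧸ (J • ⊤ : Submodule R N)),
      ∃ q' ∈ mAss R (N ⧸ (I • ⊤ : Submodule R N)), q ≤ q') (m : ℕ) :
    symbPow R I N m ⊆ symbPow R J N m := by
  rintro x ⟨s, hs, hsx⟩
  refine ⟨s, fun q hq hsq => ?_, Submodule.smul_mono_left (Ideal.pow_right_mono hIJ m) hsx⟩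
  obtain ⟨q', hq', hqq'⟩ := h q hq
  exact hs q' hq' (hqq' hsq)

lemma symbPow_subset_symbPow_of_mem_mAss [IsNoetherianRing R] [Module.Finite R N] {I p : Ideal R}
    (hp : p ∈ mAss R (N ⧸ (I • ⊤ : Submodule R N))) (m : ℕ) :
    symbPow R I N m ⊆ symbPow R p N m := by
  have hann := Submodule.annihilator_top.symm.trans_le hp.1.annihilator_le
  have : p.IsPrime := hp.1.isPrime
  refine symbPow_subset_symbPow ((le_annihilator_quotient_smul_top I).trans hann)
    (fun q hq => ⟨p, hp, ?_⟩) m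
  rw [mAss_quotient_smul_top_eq_singleton ((annihilator_le_annihilator_quotient _).trans hann)]
    at hq
  exact hq.le

end SymbolicPower

theorem stmt6_general (R : Type*) [CommRing R] [IsNoetherianRing R] (I : Ideal R)
    (N : Type*) [AddCommGroup N] [Module R N] [Module.Finite R N]
    (h : ∀ p ∈ mAss R (N ⧸ (I • ⊤ : Submodule R N)), symbEquivAdic R p N) :
    symbEquivAdic R I N := by
  intro n
  set S := mAss R (N ⧸ (I • ⊤ : Submodule R N))
  have hS : S.Finite := (associatedPrimes.finite R _).subset fun p hp => hp.prop
  obtain ⟨t, ht⟩ := (eventually_iInf_pow_smul_top_le (K := (I ^ n • ⊤ : Submodule R N)) (S := S)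
    fun _ hq => exists_mem_mAss_le_of_mem_associatedPrimes_pow_smul_top hq).exists
  obtain ⟨m, hm⟩ := ((eventually_all_finite hS).mpr fun p hp =>
    (h p hp).eventually_symbPow_subset t).exists
  refine ⟨m, fun x hx => ht ?_⟩
  simp only [Submodule.mem_iInf]
  exact fun p hp => hm p hp (symbPow_subset_symbPow_of_mem_mAss hp m hx)

theorem stmt6 (R : Type*) [CommRing R] [IsNoetherianRing R] (I : Ideal R)
    (N : Type*) [AddCommGroup N] [Module R N] [Module.Finite R N] [Nontrivial N]
    (hI : (I • ⊤ : Submodule R N) ≠ ⊤)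
    (h : ∀ p ∈ mAss R (N ⧸ (I • ⊤ : Submodule R N)), symbEquivAdic R p N) :
    symbEquivAdic R I N :=
  stmt6_general R I N h
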